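/- Let q>1 be a real number. Then there exists C₀>0 such that |exp_q(z)| ≥ C₀ for every z∈ℂ with |z| < q^{1/2}/(q−1). -/

import Mathlib

set_option autoImplicit false

open Complex Real

/-- The q-factorial `[n]_q! = ∏_{j=1}^n (q^j - 1)/(q - 1)`. -/
noncomputable def qFactorial (q : ℝ) (n : ℕ) : ℝ :=
  ∏ j ∈ Finset.range n, ((q ^ (j + 1) - 1) / (q - 1))

/-- The q-exponential `exp_q(z) = ∑_{n ≥ 0} z^n / [n]_q!`. -/
noncomputable def qExp (q : ℝ) (z : ℂ) : ℂ :=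
  ∑' n : ℕ, z ^ n / (qFactorial q n : ℂ)

/-!
The functional equation `exp_q(q z) = (1 + (q - 1) z) exp_q(z)` gives
`|exp_q(z)| ≥ (1 - (q - 1) r / q)^N |exp_q(z / q^N)|` on the disk `|z| ≤ r`, and the factor is
positive as soon as `(q - 1) r < q`. By continuity `|exp_q| ≥ 1/2` near `0`, and `z / q^N` lies
there for `N` large. The radius `√q / (q - 1)` qualifies since `√q < q`.
-/

open Finset Filter Topology
open scoped Nat

noncomputable def qNumber (q : ℝ) (n : ℕ) : ℝ := (q ^ n - 1) / (q - 1)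

variable {q : ℝ}

lemma qFactorial_succ (n : ℕ) : qFactorial q (n + 1) = qFactorial q n * qNumber q (n + 1) :=
  prod_range_succ _ n

lemma sub_one_mul_qNumber (hq : q ≠ 1) (n : ℕ) : (q - 1) * qNumber q n = q ^ n - 1 :=
  mul_div_cancel₀ _ (sub_ne_zero.2 hq)

lemma natCast_le_qNumber (hq : 1 < q) (n : ℕ) : (n : ℝ) ≤ qNumber q n := by
  rw [qNumber, ← geom_sum_eq hq.ne']
  calc (n : ℝ) = ∑ _i ∈ range n, (1 : ℝ) := by simp
    _ ≤ ∑ i ∈ range n, q ^ i := sum_le_sum fun i _ ↦ one_le_pow₀ hq.le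

lemma factorial_le_qFactorial (hq : 1 < q) (n : ℕ) : (n ! : ℝ) ≤ qFactorial q n := by
  induction n with
  | zero => simp [qFactorial]
  | succ n ih =>
    rw [Nat.factorial_succ, Nat.cast_mul, mul_comm, qFactorial_succ]
    exact mul_le_mul ih (natCast_le_qNumber hq _) (by positivity) (by linarith [n.factorial_pos])

lemma qFactorial_pos (hq : 1 < q) (n : ℕ) : 0 < qFactorial q n :=
  (Nat.cast_pos.2 n.factorial_pos).trans_le (factorial_le_qFactorial hq n)

lemma norm_pow_div_qFactorial_le (hq : 1 < q) (z : ℂ) (n : ℕ) :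
    ‖z ^ n / (qFactorial q n : ℂ)‖ ≤ ‖z‖ ^ n / n ! := by
  rw [norm_div, norm_pow, norm_real, norm_of_nonneg (qFactorial_pos hq n).le]
  exact div_le_div_of_nonneg_left (by positivity) (by positivity) (factorial_le_qFactorial hq n)

lemma hasSum_qExp (hq : 1 < q) (z : ℂ) :
    HasSum (fun n ↦ z ^ n / (qFactorial q n : ℂ)) (qExp q z) :=
  (Summable.of_norm_bounded (Real.summable_pow_div_factorial ‖z‖)
    (norm_pow_div_qFactorial_le hq z)).hasSum

lemma qExp_zero : qExp q 0 = 1 := by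
  rw [qExp, tsum_eq_single 0 fun n hn ↦ by simp [zero_pow hn]]
  simp [qFactorial]

lemma continuous_qExp (hq : 1 < q) : Continuous (qExp q) := by
  have hOn (r : ℝ) : ContinuousOn (qExp q) (Metric.closedBall 0 r) := by
    refine continuousOn_tsum (fun n ↦ by fun_prop) (Real.summable_pow_div_factorial r)
      fun n w hw ↦ (norm_pow_div_qFactorial_le hq w n).trans ?_
    exact div_le_div_of_nonneg_right (pow_le_pow_left₀ (norm_nonneg w) (by simpa using hw) n)
      (by positivity)
  refine continuous_iff_continuousAt.2 fun z ↦ (hOn (‖z‖ + 1)).continuousAt ?_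
  exact Metric.closedBall_mem_nhds_of_mem (by simp)

lemma exists_half_le_norm_qExp (hq : 1 < q) :
    ∃ δ > 0, ∀ w : ℂ, ‖w‖ < δ → 1 / 2 ≤ ‖qExp q w‖ := by
  have h : Tendsto (fun w ↦ ‖qExp q w‖) (𝓝 0) (𝓝 1) := by
    simpa [qExp_zero] using ((continuous_qExp hq).norm.tendsto 0)
  obtain ⟨δ, hδ, hball⟩ :=
    Metric.eventually_nhds_iff.1 (h.eventually_const_le (by norm_num : (1 / 2 : ℝ) < 1))
  exact ⟨δ, hδ, fun w hw ↦ hball (by simpa using hw)⟩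

/-- Termwise, `(q z)^{n+1} - z^{n+1} = (q - 1) [n+1]_q z^{n+1}`, and `[n+1]_q` cancels against
`[n+1]_q!`: the sum of `((q z)^n - z^n) / [n]_q!` is `(q - 1) z exp_q(z)`. -/
theorem qExp_ofReal_mul (hq : 1 < q) (z : ℂ) :
    qExp q (q * z) = (1 + (q - 1) * z) * qExp q z := by
  have hdiff := (hasSum_qExp hq (q * z)).sub (hasSum_qExp hq z)
  have hterm (n : ℕ) : (q * z) ^ (n + 1) / (qFactorial q (n + 1) : ℂ)
      - z ^ (n + 1) / (qFactorial q (n + 1) : ℂ) = (q - 1) * z * (z ^ n / (qFactorial q n : ℂ)) := by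
    have hF : (qFactorial q n : ℂ) ≠ 0 := by exact_mod_cast (qFactorial_pos hq n).ne'
    have hN : (qNumber q (n + 1) : ℂ) ≠ 0 := by
      exact_mod_cast ((Nat.cast_pos.2 n.succ_pos).trans_le (natCast_le_qNumber hq _)).ne'
    have hqN : ((q : ℂ) - 1) * qNumber q (n + 1) = (q : ℂ) ^ (n + 1) - 1 := by
      exact_mod_cast sub_one_mul_qNumber hq.ne' (n + 1)
    rw [qFactorial_succ, ofReal_mul]
    field_simp
    linear_combination (-z ^ (n + 1)) * hqN
  have hshift := (hasSum_qExp hq z).mul_left ((q - 1) * z)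
  simp only [← hterm] at hshift
  have h := (hasSum_nat_add_iff' (f := fun n ↦ (q * z) ^ n / (qFactorial q n : ℂ)
    - z ^ n / (qFactorial q n : ℂ)) 1).1 (by simpa [qFactorial] using hshift)
  linear_combination hdiff.unique h

lemma one_sub_mul_norm_qExp_div_le (hq : 1 < q) (z : ℂ) :
    (1 - (q - 1) * ‖z‖ / q) * ‖qExp q (z / q)‖ ≤ ‖qExp q z‖ := by
  have hq0 : (q : ℂ) ≠ 0 := by exact_mod_cast (zero_lt_one.trans hq).ne'
  have hfactor : 1 - (q - 1) * ‖z‖ / q ≤ ‖1 + (q - 1) * (z / q)‖ := by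
    have hnorm : ‖((q : ℂ) - 1) * (z / q)‖ = (q - 1) * ‖z‖ / q := by
      rw [← ofReal_one, ← ofReal_sub, norm_mul, norm_div, norm_real, norm_real,
        norm_of_nonneg (by linarith), norm_of_nonneg (by linarith), mul_div_assoc]
    have h := norm_sub_norm_le (1 : ℂ) (-(((q : ℂ) - 1) * (z / q)))
    rw [sub_neg_eq_add, norm_neg, hnorm, norm_one] at h
    linarith
  calc (1 - (q - 1) * ‖z‖ / q) * ‖qExp q (z / q)‖
      ≤ ‖1 + (q - 1) * (z / q)‖ * ‖qExp q (z / q)‖ := by gcongr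
    _ = ‖qExp q z‖ := by rw [← norm_mul, ← qExp_ofReal_mul hq, mul_div_cancel₀ _ hq0]

lemma pow_mul_norm_qExp_div_pow_le (hq : 1 < q) {r : ℝ} (hr : (q - 1) * r ≤ q) (N : ℕ)
    {z : ℂ} (hz : ‖z‖ ≤ r) :
    (1 - (q - 1) * r / q) ^ N * ‖qExp q (z / q ^ N)‖ ≤ ‖qExp q z‖ := by
  induction N generalizing z with
  | zero => simp
  | succ N ih =>
    have hq0 : 0 < q := zero_lt_one.trans hq
    have hc : 0 ≤ 1 - (q - 1) * r / q := sub_nonneg.2 ((div_le_one hq0).2 hr)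
    have hcz : 1 - (q - 1) * r / q ≤ 1 - (q - 1) * ‖z‖ / q := by gcongr
    have hzq : ‖z / q‖ ≤ r := by
      rw [norm_div, norm_real, norm_of_nonneg hq0.le]
      exact (div_le_self (norm_nonneg z) hq.le).trans hz
    calc (1 - (q - 1) * r / q) ^ (N + 1) * ‖qExp q (z / q ^ (N + 1))‖
        = (1 - (q - 1) * r / q) * ((1 - (q - 1) * r / q) ^ N * ‖qExp q (z / q / q ^ N)‖) := by
          rw [div_div, ← pow_succ', pow_succ']
          ring
      _ ≤ (1 - (q - 1) * ‖z‖ / q) * ‖qExp q (z / q)‖ :=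
          mul_le_mul hcz (ih hzq) (by positivity) (hc.trans hcz)
      _ ≤ ‖qExp q z‖ := one_sub_mul_norm_qExp_div_le hq z

theorem exists_pos_le_norm_qExp (hq : 1 < q) {r : ℝ} (hr : (q - 1) * r < q) :
    ∃ C₀ : ℝ, 0 < C₀ ∧ ∀ z : ℂ, ‖z‖ ≤ r → C₀ ≤ ‖qExp q z‖ := by
  have hq0 : 0 < q := zero_lt_one.trans hq
  have hc : 0 < 1 - (q - 1) * r / q := sub_pos.2 ((div_lt_one hq0).2 hr)
  obtain ⟨δ, hδ, hsmall⟩ := exists_half_le_norm_qExp hq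
  obtain ⟨N, hN⟩ := pow_unbounded_of_one_lt (r / δ) hq
  refine ⟨(1 - (q - 1) * r / q) ^ N * (1 / 2), by positivity, fun z hz ↦ ?_⟩
  have hzN : ‖z / (q : ℂ) ^ N‖ < δ := by
    rw [norm_div, norm_pow, norm_real, norm_of_nonneg hq0.le, div_lt_iff₀ (by positivity)]
    rw [div_lt_iff₀ hδ] at hN
    linarith
  calc (1 - (q - 1) * r / q) ^ N * (1 / 2)
      ≤ (1 - (q - 1) * r / q) ^ N * ‖qExp q (z / q ^ N)‖ := by gcongr; exact hsmall _ hzN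
    _ ≤ ‖qExp q z‖ := pow_mul_norm_qExp_div_pow_le hq hr.le N hz

theorem qExp_lower_bound_disk (q : ℝ) (hq : 1 < q) :
    ∃ C₀ : ℝ, 0 < C₀ ∧ ∀ z : ℂ, ‖z‖ < Real.sqrt q / (q - 1) → C₀ ≤ ‖qExp q z‖ := by
  have hr : (q - 1) * (Real.sqrt q / (q - 1)) < q := by
    rw [mul_div_cancel₀ _ (sub_ne_zero.2 hq.ne')]
    exact Real.sqrt_lt_self_iff.2 hq
  obtain ⟨C₀, hC₀, hbound⟩ := exists_pos_le_norm_qExp hq hr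
  exact ⟨C₀, hC₀, fun z hz ↦ hbound z hz.le⟩
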